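/- For all n ≥ 3, the cycle C_n on n vertices satisfies th_-(C_n) = ⌈√(2n) − 1/2⌉. -/

import Mathlib

open SimpleGraph

/-- One round of skew zero forcing: every vertex (blue or white) with exactly one
white neighbor colors that neighbor blue. -/
def skewStep {V : Type*} (G : SimpleGraph V) (B : Set V) : Set V :=
  B ∪ {w | ∃ v, G.Adj v w ∧ ∀ u, G.Adj v u → u ∉ B → u = w}

/-- The set of blue vertices after `n` rounds of skew zero forcing starting from `S`. -/
def skewIter {V : Type*} (G : SimpleGraph V) (S : Set V) : ℕ → Set V
  | 0 => S
  | n + 1 => skewStep G (skewIter G S n)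

/-- `S` is a skew zero forcing set of `G`. -/
def IsSkewZFS {V : Type*} (G : SimpleGraph V) (S : Set V) : Prop :=
  ∃ n, skewIter G S n = Set.univ

/-- The skew propagation time `pt₋(G;S)`: the number of rounds needed for all
vertices to become blue. -/
noncomputable def skewPt {V : Type*} (G : SimpleGraph V) (S : Set V) : ℕ :=
  sInf {n | skewIter G S n = Set.univ}

/-- The skew throttling number `th₋(G)`. -/
noncomputable def skewTh {V : Type*} (G : SimpleGraph V) : ℕ :=
  sInf {m | ∃ S : Set V, IsSkewZFS G S ∧ m = S.ncard + skewPt G S}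

/-- The skew throttling number over sets of size `k`, `th₋(G,k)`. -/
noncomputable def skewThK {V : Type*} (G : SimpleGraph V) (k : ℕ) : ℕ :=
  sInf {m | ∃ S : Set V, IsSkewZFS G S ∧ S.ncard = k ∧ m = S.ncard + skewPt G S}

/-- The skew zero forcing number `Z₋(G)`. -/
noncomputable def skewZ {V : Type*} (G : SimpleGraph V) : ℕ :=
  sInf {m | ∃ S : Set V, IsSkewZFS G S ∧ m = S.ncard}

/-- The skew propagation time `pt₋(G)`: minimum propagation time over minimum
skew zero forcing sets. -/
noncomputable def skewPtMin {V : Type*} (G : SimpleGraph V) : ℕ :=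
  sInf {m | ∃ S : Set V, IsSkewZFS G S ∧ S.ncard = skewZ G ∧ m = skewPt G S}

/-- `rK₂`: the disjoint union of `r` copies of `K₂`. -/
def rK2 (r : ℕ) : SimpleGraph (Fin r × Fin 2) :=
  SimpleGraph.fromRel (fun a b => a.1 = b.1)

/-- Disjoint union of two simple graphs. -/
def disjUnion {α β : Type*} (G : SimpleGraph α) (H : SimpleGraph β) :
    SimpleGraph (α ⊕ β) :=
  SimpleGraph.fromRel (fun x y =>
    match x, y with
    | Sum.inl a, Sum.inl b => G.Adj a b
    | Sum.inr a, Sum.inr b => H.Adj a b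
    | _, _ => False)

/-- The corona `G ∘ K₁`: attach a pendant leaf to every vertex of `G`. -/
def coronaK1 {α : Type*} (G : SimpleGraph α) : SimpleGraph (α ⊕ α) :=
  SimpleGraph.fromRel (fun x y =>
    match x, y with
    | Sum.inl a, Sum.inl b => G.Adj a b
    | Sum.inl a, Sum.inr b => a = b
    | _, _ => False)

/-- The corona `G ∘ K₂`: attach a private copy of `K₂` (a triangle) to every
vertex of `G`. -/
def coronaK2 {α : Type*} (G : SimpleGraph α) : SimpleGraph (α ⊕ α × Fin 2) :=
  SimpleGraph.fromRel (fun x y =>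
    match x, y with
    | Sum.inl a, Sum.inl b => G.Adj a b
    | Sum.inl a, Sum.inr b => a = b.1
    | Sum.inr a, Sum.inr b => a.1 = b.1
    | _, _ => False)

/-- The graph `H(s,t)` with hub `b`, pendant paths `b xᵢ yᵢ` and triangles `b zᵢ wᵢ`. -/
def Hgraph (s t : ℕ) : SimpleGraph (Unit ⊕ ((Fin s × Fin 2) ⊕ (Fin t × Fin 2))) :=
  SimpleGraph.fromRel (fun x y =>
    match x, y with
    | Sum.inl _, Sum.inr (Sum.inl p) => p.2 = 0
    | Sum.inl _, Sum.inr (Sum.inr _) => True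
    | Sum.inr (Sum.inl p), Sum.inr (Sum.inl q) => p.1 = q.1
    | Sum.inr (Sum.inr p), Sum.inr (Sum.inr q) => p.1 = q.1
    | _, _ => False)

/-- The friendship graph `Fₙ`: a universal vertex joined to `n` disjoint copies of `K₂`. -/
def friendshipGraph (n : ℕ) : SimpleGraph (Unit ⊕ (Fin n × Fin 2)) :=
  SimpleGraph.fromRel (fun x y =>
    match x, y with
    | Sum.inl _, Sum.inr _ => True
    | Sum.inr p, Sum.inr q => p.1 = q.1
    | _, _ => False)

/-- The balanced spider `T_{p,ℓ}`: a center with `p` legs of `ℓ` vertices each. -/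
def spider (p ℓ : ℕ) : SimpleGraph (Unit ⊕ (Fin p × Fin ℓ)) :=
  SimpleGraph.fromRel (fun x y =>
    match x, y with
    | Sum.inl _, Sum.inr q => q.2.val = 0
    | Sum.inr q, Sum.inr q' => q.1 = q'.1 ∧ q'.2.val = q.2.val + 1
    | _, _ => False)

/-- The hypercube graph `Qₙ`: binary strings of length `n`, adjacent iff they
differ in exactly one coordinate. -/
def hypercube (n : ℕ) : SimpleGraph (Fin n → Bool) :=
  SimpleGraph.fromRel (fun x y => ∃! i, x i ≠ y i)

/-!
On `Cₙ` with `n ≥ 3`, a white vertex `x` is forced in a round exactly when `x - 2` or `x + 2` is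
blue (through the common neighbour `x ∓ 1`), so after `t` rounds the blue set is `S + 2·[-t, t]`.
Covering all `n` vertices this way needs `n ≤ |S| (2t + 1) ≤ (|S| + t)(|S| + t + 1) / 2`, so
`th₋(Cₙ)` is at least the least `N` with `2n ≤ N (N + 1)`. Conversely, splitting `N = |S| + t`
evenly and placing the centres along the orbits of `x ↦ x + 2` (one orbit for odd `n`, two of
length `n / 2` for even `n`) attains `N`. Finally `N (N - 1) < 2n ≤ N (N + 1)` says exactly that
`N = ⌈√(2n) - 1/2⌉`.
-/

open scoped Fin.IntCast Fin.NatCast Fin.CommRing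

lemma skewIter_skewPt {V : Type*} {G : SimpleGraph V} {S : Set V} (hS : IsSkewZFS G S) :
    skewIter G S (skewPt G S) = Set.univ :=
  Nat.sInf_mem hS

theorem skewTh_eq_of_forall_le {V : Type*} {G : SimpleGraph V} {N : ℕ}
    (hle : ∀ S t, skewIter G S t = Set.univ → N ≤ S.ncard + t)
    (hex : ∃ S t, skewIter G S t = Set.univ ∧ S.ncard + t ≤ N) : skewTh G = N := by
  obtain ⟨S, t, hSt, hN⟩ := hex
  have hmem : S.ncard + skewPt G S ∈
      {m | ∃ S : Set V, IsSkewZFS G S ∧ m = S.ncard + skewPt G S} := ⟨S, ⟨t, hSt⟩, rfl⟩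
  apply le_antisymm
  · calc skewTh G ≤ S.ncard + skewPt G S := Nat.sInf_le hmem
      _ ≤ S.ncard + t := by gcongr; exact Nat.sInf_le hSt
      _ ≤ N := hN
  · obtain ⟨T, hT, hTh⟩ := Nat.sInf_mem ⟨_, hmem⟩
    rw [skewTh, hTh]
    exact hle T _ (skewIter_skewPt hT)

def stepTwoBall {R : Type*} [Ring R] (S : Set R) (t : ℕ) : Set R :=
  {x | ∃ s ∈ S, ∃ j : ℤ, j.natAbs ≤ t ∧ x = s + 2 * j}

lemma card_le_ncard_mul_of_stepTwoBall_eq_univ {R : Type*} [Ring R] [Fintype R] {S : Set R}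
    {t : ℕ} (hS : stepTwoBall S t = Set.univ) : Fintype.card R ≤ S.ncard * (2 * t + 1) := by
  classical
  have hsub : (Finset.univ : Finset R) ⊆ (S.toFinset ×ˢ Finset.Icc (-(t : ℤ)) t).image
      fun p => p.1 + 2 * p.2 := by
    intro x _
    obtain ⟨s, hs, j, hj, rfl⟩ : x ∈ stepTwoBall S t := hS ▸ Set.mem_univ x
    exact Finset.mem_image.2 ⟨(s, j), by simp [hs]; omega, rfl⟩
  calc Fintype.card R ≤ _ := (Finset.card_le_card hsub).trans Finset.card_image_le
    _ = S.ncard * (2 * t + 1) := by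
      rw [Finset.card_product, Int.card_Icc, Set.ncard_eq_toFinset_card']
      congr; omega

lemma exists_ncard_le_stepTwoBall_eq_univ {R : Type*} [CommRing R] {g m r q : ℕ}
    (hR : ∀ x : R, ∃ e < g, ∃ i < m, x = ((e + 2 * i : ℕ) : R))
    (hm : m ≤ r * (2 * q + 1)) :
    ∃ S : Set R, S.ncard ≤ g * r ∧ stepTwoBall S q = Set.univ := by
  classical
  -- the ball around the centre with index `(e, k)` covers `e + 2i` for `i` in the `k`-th block
  -- of `2q + 1` consecutive values
  refine ⟨(fun p : ℕ × ℕ => ((p.1 + 2 * (p.2 * (2 * q + 1) + q) : ℕ) : R)) ''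
    ↑(Finset.range g ×ˢ Finset.range r), ?_, Set.eq_univ_of_forall fun x => ?_⟩
  · calc _ ≤ (↑(Finset.range g ×ˢ Finset.range r) : Set (ℕ × ℕ)).ncard :=
          Set.ncard_image_le
      _ = g * r := by simp
  obtain ⟨e, he, i, hi, rfl⟩ := hR x
  obtain ⟨k, b, hb, rfl⟩ : ∃ k b, b < 2 * q + 1 ∧ i = k * (2 * q + 1) + b :=
    ⟨i / (2 * q + 1), i % (2 * q + 1), Nat.mod_lt _ (by omega), (Nat.div_add_mod' _ _).symm⟩
  have hk : k < r := by
    by_contra! hk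
    nlinarith
  exact ⟨_, ⟨(e, k), by simp [he, hk], rfl⟩, (b : ℤ) - q, by omega, by push_cast; ring⟩

lemma exists_add_eq_and_le_mul {n N : ℕ} (h : 2 * n ≤ N * N + N) :
    ∃ r q, r + q = N ∧ n ≤ r * (2 * q + 1) := by
  obtain ⟨k, rfl | rfl⟩ := Nat.even_or_odd' N
  · exact ⟨k, k, by ring, by nlinarith⟩
  · exact ⟨k + 1, k, by ring, by nlinarith⟩

lemma exists_two_mul_add_eq_and_le_mul {m N : ℕ} (h : 4 * m ≤ N * N + N) :
    ∃ r q, 2 * r + q = N ∧ m ≤ r * (2 * q + 1) := by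
  obtain ⟨k, hk | hk | hk | hk⟩ :
      ∃ k, N = 4 * k ∨ N = 4 * k + 1 ∨ N = 4 * k + 2 ∨ N = 4 * k + 3 :=
    ⟨N / 4, by omega⟩ <;> subst hk
  · exact ⟨k, 2 * k, by ring, by nlinarith⟩
  · exact ⟨k, 2 * k + 1, by ring, by nlinarith⟩
  · exact ⟨k + 1, 2 * k, by ring, by nlinarith⟩
  · exact ⟨k + 1, 2 * k + 1, by ring, by nlinarith⟩

section Cycle

variable {n : ℕ} [NeZero n]

lemma Fin.exists_eq_two_mul_of_odd (hn : Odd n) (x : Fin n) :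
    ∃ i < n, x = ((2 * i : ℕ) : Fin n) := by
  obtain ⟨k, hk⟩ := hn
  obtain ⟨i, hi | hi⟩ := Nat.even_or_odd' x.val
  · exact ⟨i, by omega, by rw [← hi, Fin.cast_val_eq_self]⟩
  · refine ⟨i + k + 1, by omega, ?_⟩
    rw [show 2 * (i + k + 1) = x.val + n by omega]
    simp

lemma Fin.exists_eq_add_two_mul_of_even {m : ℕ} [NeZero (m + m)] (x : Fin (m + m)) :
    ∃ e < 2, ∃ i < m, x = ((e + 2 * i : ℕ) : Fin (m + m)) :=
  ⟨x.val % 2, by omega, x.val / 2, by omega, by rw [Nat.mod_add_div, Fin.cast_val_eq_self]⟩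

lemma Fin.two_ne_zero_of_three_le (hn : 3 ≤ n) : (2 : Fin n) ≠ 0 := by
  simp [Fin.ext_iff, Nat.mod_eq_of_lt (show 2 < n by omega)]

lemma Fin.one_ne_zero_of_two_le (hn : 2 ≤ n) : (1 : Fin n) ≠ 0 := by
  simp [Fin.ext_iff, Nat.mod_eq_of_lt (show 1 < n by omega)]

lemma cycleGraph_adj_iff (hn : 2 ≤ n) {u v : Fin n} :
    (cycleGraph n).Adj u v ↔ v = u + 1 ∨ v = u - 1 := by
  obtain ⟨m, rfl⟩ : ∃ m, n = m + 1 := ⟨n - 1, by omega⟩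
  have h1 := Fin.one_ne_zero_of_two_le hn
  rw [cycleGraph_eq_circulantGraph, circulantGraph_adj, Set.mem_singleton_iff,
    Set.mem_singleton_iff]
  constructor
  · rintro ⟨-, h | h⟩
    · exact .inr (by rw [← h]; ring)
    · exact .inl (by rw [← h]; ring)
  · rintro (rfl | rfl)
    · exact ⟨fun h => h1 (by linear_combination -h), .inr (by ring)⟩
    · exact ⟨fun h => h1 (by linear_combination h), .inl (by ring)⟩

lemma mem_skewStep_cycleGraph (hn : 3 ≤ n) {B : Set (Fin n)} {x : Fin n} :
    x ∈ skewStep (cycleGraph n) B ↔ x ∈ B ∨ x - 2 ∈ B ∨ x + 2 ∈ B := by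
  have h2 := Fin.two_ne_zero_of_three_le hn
  simp only [skewStep, Set.mem_union, Set.mem_ofPred_eq, cycleGraph_adj_iff (by omega : 2 ≤ n)]
  refine or_congr_right ⟨?_, ?_⟩
  · rintro ⟨v, rfl | rfl, hv⟩
    · refine .inl (by_contra fun h => h2 ?_)
      have := hv (v - 1) (.inr rfl) (by rwa [show v + 1 - 2 = v - 1 by ring] at h)
      linear_combination -this
    · refine .inr (by_contra fun h => h2 ?_)
      have := hv (v + 1) (.inl rfl) (by rwa [show v - 1 + 2 = v + 1 by ring] at h)
      linear_combination this
  · rintro (hx | hx)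
    · refine ⟨x - 1, .inl (by ring), ?_⟩
      rintro u (rfl | rfl) hu
      · ring
      · exact absurd (by rwa [show x - 1 - 1 = x - 2 by ring]) hu
    · refine ⟨x + 1, .inr (by ring), ?_⟩
      rintro u (rfl | rfl) hu
      · exact absurd (by rwa [show x + 1 + 1 = x + 2 by ring]) hu
      · ring

lemma skewIter_cycleGraph (hn : 3 ≤ n) (S : Set (Fin n)) (t : ℕ) :
    skewIter (cycleGraph n) S t = stepTwoBall S t := by
  induction t with
  | zero =>
    ext x
    simp only [skewIter, stepTwoBall, Set.mem_ofPred_eq, nonpos_iff_eq_zero, Int.natAbs_eq_zero]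
    exact ⟨fun hx => ⟨x, hx, 0, rfl, by simp⟩, by rintro ⟨s, hs, _, rfl, rfl⟩; simpa⟩
  | succ t ih =>
    ext x
    simp only [skewIter, mem_skewStep_cycleGraph hn, ih, stepTwoBall, Set.mem_ofPred_eq]
    constructor
    · rintro (⟨s, hs, j, hj, hx⟩ | ⟨s, hs, j, hj, hx⟩ | ⟨s, hs, j, hj, hx⟩)
      · exact ⟨s, hs, j, by omega, hx⟩
      · exact ⟨s, hs, j + 1, by omega, by push_cast; linear_combination hx⟩
      · exact ⟨s, hs, j - 1, by omega, by push_cast; linear_combination hx⟩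
    · rintro ⟨s, hs, j, hj, hx⟩
      rcases lt_trichotomy j 0 with hj0 | rfl | hj0
      · exact .inr (.inr ⟨s, hs, j + 1, by omega, by push_cast; linear_combination hx⟩)
      · exact .inl ⟨s, hs, 0, by omega, hx⟩
      · exact .inr (.inl ⟨s, hs, j - 1, by omega, by push_cast; linear_combination hx⟩)

lemma two_mul_le_of_skewIter_cycleGraph_eq_univ (hn : 3 ≤ n) {S : Set (Fin n)} {t : ℕ}
    (h : skewIter (cycleGraph n) S t = Set.univ) :
    2 * n ≤ (S.ncard + t) * (S.ncard + t) + (S.ncard + t) := by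
  have hcard : n ≤ S.ncard * (2 * t + 1) := by
    rw [skewIter_cycleGraph hn] at h
    simpa using card_le_ncard_mul_of_stepTwoBall_eq_univ h
  rcases le_or_gt S.ncard t with hSt | hSt <;> nlinarith

lemma exists_skewIter_cycleGraph_eq_univ (hn : 3 ≤ n) {N : ℕ} (hN : 2 * n ≤ N * N + N) :
    ∃ S : Set (Fin n), ∃ t, skewIter (cycleGraph n) S t = Set.univ ∧ S.ncard + t ≤ N := by
  simp only [skewIter_cycleGraph hn]
  rcases Nat.even_or_odd n with ⟨m, rfl⟩ | hodd
  · obtain ⟨r, q, hrq, hm⟩ := exists_two_mul_add_eq_and_le_mul (m := m) (N := N) (by omega)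
    obtain ⟨S, hS, hSq⟩ :=
      exists_ncard_le_stepTwoBall_eq_univ Fin.exists_eq_add_two_mul_of_even hm
    exact ⟨S, q, hSq, by omega⟩
  · obtain ⟨r, q, hrq, hm⟩ := exists_add_eq_and_le_mul hN
    have hR (x : Fin n) : ∃ e < 1, ∃ i < n, x = ((e + 2 * i : ℕ) : Fin n) :=
      ⟨0, Nat.zero_lt_one, by simpa only [zero_add] using Fin.exists_eq_two_mul_of_odd hodd x⟩
    obtain ⟨S, hS, hSq⟩ := exists_ncard_le_stepTwoBall_eq_univ hR hm
    exact ⟨S, q, hSq, by omega⟩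

end Cycle

lemma exists_sq_sub_lt_and_le_sq_add (n : ℕ) (hn : 0 < n) :
    ∃ N : ℕ, N * N < 2 * n + N ∧ 2 * n ≤ N * N + N := by
  have hex : ∃ N : ℕ, 2 * n ≤ N * N + N := ⟨2 * n, by nlinarith⟩
  refine ⟨Nat.find hex, ?_, Nat.find_spec hex⟩
  obtain ⟨M, hM⟩ := Nat.exists_eq_add_one_of_ne_zero ((Nat.find_pos hex).2 (by omega)).ne'
  have := Nat.find_min hex (show M < Nat.find hex by omega)
  rw [hM]
  nlinarith

lemma ceil_sqrt_two_mul_sub_half {n N : ℕ} (hlt : N * N < 2 * n + N) (hle : 2 * n ≤ N * N + N) :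
    ⌈Real.sqrt (2 * n) - 1 / 2⌉ = N := by
  have hlt' : (N : ℝ) * N + 1 ≤ 2 * n + N := by exact_mod_cast hlt
  have hle' : 2 * (n : ℝ) ≤ N * N + N := by exact_mod_cast hle
  rw [Int.ceil_eq_iff, Int.cast_natCast]
  constructor
  · have : (N : ℝ) - 1 / 2 < Real.sqrt (2 * n) := Real.lt_sqrt_of_sq_lt (by nlinarith)
    linarith
  · have : Real.sqrt (2 * n) ≤ N + 1 / 2 := Real.sqrt_le_iff.2 ⟨by positivity, by nlinarith⟩
    linarith

/-- `th₋(Cₙ) = ⌈√(2n) - 1/2⌉` for `n ≥ 3`. -/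
theorem skewTh_cycleGraph (n : ℕ) (hn : 3 ≤ n) :
    (skewTh (SimpleGraph.cycleGraph n) : ℤ) = ⌈Real.sqrt (2 * n) - 1 / 2⌉ := by
  have : NeZero n := ⟨by omega⟩
  obtain ⟨N, hN_lt, hN_le⟩ := exists_sq_sub_lt_and_le_sq_add n (by omega)
  rw [ceil_sqrt_two_mul_sub_half hN_lt hN_le, Nat.cast_inj]
  refine skewTh_eq_of_forall_le (fun S t h => ?_) (exists_skewIter_cycleGraph_eq_univ hn hN_le)
  have := two_mul_le_of_skewIter_cycleGraph_eq_univ hn h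
  by_contra! hlt
  nlinarith
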